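/- Let A be a finite elementary abelian p-group, ℓ coprime to p, and M a (ℤ/ℓℤ)[A]-module such that the coinvariants M_A = M/I_A·M are trivial. Then M decomposes as a direct sum M = ⊕_i ε_i M, where the sum runs over all index-p subgroups A_i of A and ε_i = (1/|A_i|)Σ_{a∈A_i} a. -/

import Mathlib

/-
Write `ε_H` for the averaging idempotent of a hyperplane `H` of `V = 𝔽_p^r` and `ε = ε_V`.
Two distinct hyperplanes span `V`, so `ε_H ε_K = ε`; and `ε` kills `M`, because `ε (σ - 1) = 0`
and `M = I_A M`. The hyperplanes avoiding a given `a ≠ 0` correspond to the functionals `φ` with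
`φ a = 1`, so there are `|V| / p = |H|` of them; hence the coefficient of `∑_H ε_H` at `a ≠ 0` is
smaller by exactly `1` than at `0`, i.e. `∑_H ε_H - 1` is a multiple of `ε`. So the `ε_H` act on
`M` as a complete family of orthogonal idempotents, and their images decompose `M`.
-/

/-- The averaging idempotent `ε_B = (1/|B|) Σ_{a ∈ B} a` in the group algebra
`(ℤ/ℓℤ)[A]` attached to a subgroup `B` of a finite additive group `A`. -/
noncomputable def eps (ℓ : ℕ) {A : Type*} [AddCommGroup A] [Finite A]
    (B : AddSubgroup A) : AddMonoidAlgebra (ZMod ℓ) A :=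
  haveI : Fintype B := Fintype.ofFinite B
  (Nat.card B : ZMod ℓ)⁻¹ • ∑ a : B, AddMonoidAlgebra.single (a : A) (1 : ZMod ℓ)

/-- The augmentation ideal `I_A ⊆ (ℤ/ℓℤ)[A]`, generated by the elements `σ - 1`. -/
noncomputable def augIdeal (ℓ : ℕ) (A : Type*) [AddCommGroup A] :
    Ideal (AddMonoidAlgebra (ZMod ℓ) A) :=
  Ideal.span {x | ∃ σ : A, x = AddMonoidAlgebra.single σ 1 - 1}

noncomputable instance (p r : ℕ) :
    DecidableEq {B : AddSubgroup (Fin r → ZMod p) // B.index = p} :=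
  Classical.decEq _

open AddMonoidAlgebra Finset

lemma ZMod.inv_mul_inv_mul_eq_inv_of_mul_eq {ℓ a b c k : ℕ} (ha : IsUnit (a : ZMod ℓ))
    (hb : IsUnit (b : ZMod ℓ)) (hc : IsUnit (c : ZMod ℓ)) (h : k * a = b * c) :
    (b : ZMod ℓ)⁻¹ * (c : ZMod ℓ)⁻¹ * k = (a : ZMod ℓ)⁻¹ := by
  have h' : (k : ZMod ℓ) * a = b * c := by rw [← Nat.cast_mul, h, Nat.cast_mul]
  calc (b : ZMod ℓ)⁻¹ * (c : ZMod ℓ)⁻¹ * k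
      = (b : ZMod ℓ)⁻¹ * (c : ZMod ℓ)⁻¹ * ((k : ZMod ℓ) * a) * (a : ZMod ℓ)⁻¹ := by
        rw [mul_assoc _ ((k : ZMod ℓ) * a), mul_assoc (k : ZMod ℓ), ZMod.mul_inv_of_unit _ ha,
          mul_one]
    _ = (a : ZMod ℓ)⁻¹ := by
        rw [h', mul_mul_mul_comm, ZMod.inv_mul_of_unit _ hb, ZMod.inv_mul_of_unit _ hc, one_mul,
          one_mul]

section GroupAlgebra

variable {ℓ : ℕ} {A : Type*} [AddCommGroup A]

lemma isUnit_card_addSubgroup (hA : (Nat.card A).Coprime ℓ) (B : AddSubgroup A) :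
    IsUnit (Nat.card B : ZMod ℓ) :=
  (ZMod.isUnit_iff_coprime _ _).2 <| hA.coprime_dvd_left B.card_addSubgroup_dvd_card

lemma sum_single_eq_card_ker_smul_of_surjective {k G : Type*} [Semiring k] [AddGroup G]
    [Fintype G] [Fintype A] {f : G →+ A} (hf : Function.Surjective f) :
    ∑ g, single (f g) (1 : k) = (Nat.card f.ker : k) • ∑ a, single a 1 := by
  classical
  rw [← Finset.sum_fiberwise Finset.univ f, Finset.smul_sum]
  refine Fintype.sum_congr _ _ fun a => ?_
  rw [Finset.sum_congr rfl fun g hg => by rw [(Finset.mem_filter.1 hg).2], Finset.sum_const,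
    ← Nat.cast_smul_eq_nsmul k, ← Nat.card_congr (f.fiberEquivKerOfSurjective hf a)]
  simp [Nat.card_eq_fintype_card, Fintype.card_subtype]

variable [Finite A]

lemma eps_eq_smul_sum (B : AddSubgroup A) [Fintype B] :
    eps ℓ B = (Nat.card B : ZMod ℓ)⁻¹ • ∑ a : B, single (a : A) (1 : ZMod ℓ) := by
  unfold eps
  congr!

lemma eps_top_eq_smul_sum [Fintype A] :
    eps ℓ (⊤ : AddSubgroup A) = (Nat.card A : ZMod ℓ)⁻¹ • ∑ a : A, single a (1 : ZMod ℓ) := by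
  classical
  rw [eps_eq_smul_sum, AddSubgroup.card_top]
  congr 1
  exact Fintype.sum_equiv AddSubgroup.topEquiv.toEquiv _ _ fun _ => rfl

lemma coeff_eps (B : AddSubgroup A) (a : A) [Decidable (a ∈ B)] :
    (eps ℓ B).coeff a = if a ∈ B then (Nat.card B : ZMod ℓ)⁻¹ else 0 := by
  classical
  have : Fintype B := Fintype.ofFinite B
  rw [eps_eq_smul_sum, coeff_smul_apply, coeff_sum, Finsupp.finsetSum_apply]
  simp only [coeff_single, Finsupp.single_apply]
  split_ifs with h
  · rw [Finset.sum_eq_single ⟨a, h⟩ (fun b _ hb => if_neg fun e => hb (Subtype.ext e)) (by simp)]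
    simp
  · rw [Finset.sum_eq_zero fun b _ => if_neg ?_, smul_zero]
    rintro rfl
    exact h b.2

lemma eq_smul_eps_top_of_coeff_eq (hA : (Nat.card A).Coprime ℓ) {x : AddMonoidAlgebra (ZMod ℓ) A}
    (hx : ∀ a, x.coeff a = x.coeff 0) :
    x = (x.coeff 0 * Nat.card A) • eps ℓ (⊤ : AddSubgroup A) := by
  classical
  refine coeff_injective (Finsupp.ext fun a => ?_)
  rw [coeff_smul_apply, coeff_eps, if_pos (AddSubgroup.mem_top a), AddSubgroup.card_top,
    smul_eq_mul, mul_assoc, ZMod.mul_inv_of_unit _ (by simpa using isUnit_card_addSubgroup hA ⊤),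
    mul_one, hx]

lemma eps_mul_single_of_mem {B : AddSubgroup A} {b : A} (hb : b ∈ B) :
    eps ℓ B * single b 1 = eps ℓ B := by
  have : Fintype B := Fintype.ofFinite B
  rw [eps_eq_smul_sum, smul_mul_assoc, Finset.sum_mul]
  simp only [single_mul_single, one_mul]
  congr 1
  exact Fintype.sum_equiv (Equiv.addRight ⟨b, hb⟩) _ _ fun _ => rfl

lemma eps_mul_eps_of_sup_eq_top (hA : (Nat.card A).Coprime ℓ) {B C : AddSubgroup A}
    (hBC : B ⊔ C = ⊤) : eps ℓ B * eps ℓ C = eps ℓ ⊤ := by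
  classical
  have : Fintype A := Fintype.ofFinite A
  let f : B × C →+ A := B.subtype.coprod C.subtype
  have hf : Function.Surjective f := by
    intro a
    obtain ⟨b, hb, c, hc, rfl⟩ := AddSubgroup.mem_sup.1 (hBC ▸ AddSubgroup.mem_top a)
    exact ⟨(⟨b, hb⟩, ⟨c, hc⟩), rfl⟩
  have hcard : Nat.card f.ker * Nat.card A = Nat.card B * Nat.card C := by
    rw [← Nat.card_prod B C, ← f.ker.card_mul_index, AddSubgroup.index_ker, f.range_eq_top.2 hf,
      AddSubgroup.card_top]
  rw [eps_eq_smul_sum, eps_eq_smul_sum, eps_top_eq_smul_sum, smul_mul_smul_comm, Finset.sum_mul_sum,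
    ← Finset.sum_product', Finset.univ_product_univ]
  simp only [single_mul_single, one_mul]
  rw [show ∑ z : B × C, single ((z.1 : A) + z.2) (1 : ZMod ℓ) = ∑ z, single (f z) 1 from rfl,
    sum_single_eq_card_ker_smul_of_surjective hf, smul_smul]
  congr 1
  exact ZMod.inv_mul_inv_mul_eq_inv_of_mul_eq
    (AddSubgroup.card_top (G := A) ▸ isUnit_card_addSubgroup hA ⊤)
    (isUnit_card_addSubgroup hA B) (isUnit_card_addSubgroup hA C) hcard

lemma augIdeal_le_annihilator_eps_top :
    augIdeal ℓ A ≤ (Submodule.span _ {eps ℓ (⊤ : AddSubgroup A)}).annihilator := by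
  refine Ideal.span_le.2 ?_
  rintro _ ⟨σ, rfl⟩
  rw [SetLike.mem_coe, Submodule.mem_annihilator_span_singleton, smul_eq_mul, mul_comm, mul_sub,
    mul_one, eps_mul_single_of_mem (AddSubgroup.mem_top σ), sub_self]

end GroupAlgebra

lemma smul_eq_zero_of_le_annihilator {R M : Type*} [CommRing R] [AddCommGroup M] [Module R M]
    {I : Ideal R} (hI : I • (⊤ : Submodule R M) = ⊤) {e : R}
    (he : I ≤ (Submodule.span R {e}).annihilator) (m : M) : e • m = 0 := by
  have hm : m ∈ I • (⊤ : Submodule R M) := by rw [hI]; exact Submodule.mem_top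
  refine Submodule.smul_induction_on hm (fun x hx n _ => ?_) fun x y hx hy => ?_
  · rw [smul_smul, mul_comm, ← smul_eq_mul,
      (Submodule.mem_annihilator_span_singleton _ _).1 (he hx), zero_smul]
  · rw [smul_add, hx, hy, add_zero]

lemma CompleteOrthogonalIdempotents.isInternal_range {R M ι : Type*} [Ring R] [AddCommGroup M]
    [Module R M] [Fintype ι] [DecidableEq ι] {f : ι → Module.End R M}
    (hf : CompleteOrthogonalIdempotents f) :
    DirectSum.IsInternal fun i => LinearMap.range (f i) := by
  rw [DirectSum.isInternal_submodule_iff_iSupIndep_and_iSup_eq_top]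
  refine ⟨fun i => Submodule.disjoint_def.2 fun x hxi hx => ?_, eq_top_iff.2 fun x _ => ?_⟩
  · have hker : ⨆ (j) (_ : j ≠ i), LinearMap.range (f j) ≤ LinearMap.ker (f i) :=
      iSup₂_le fun j hj => LinearMap.range_le_ker_iff.2 (hf.ortho hj.symm)
    obtain ⟨y, rfl⟩ := hxi
    rw [← (hf.idem i).eq, Module.End.mul_apply]
    exact hker hx
  · rw [← Module.End.one_apply (R := R) x, ← hf.complete, LinearMap.sum_apply]
    exact Submodule.sum_mem _ fun i _ => Submodule.mem_iSup_of_mem i (LinearMap.mem_range_self _ _)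

lemma AddSubgroup.isCoatom_of_index_eq_prime {G : Type*} [AddGroup G] {p : ℕ} (hp : p.Prime)
    {H : AddSubgroup G} (hH : H.index = p) : IsCoatom H := by
  refine ⟨fun h => hp.one_lt.ne' (hH ▸ AddSubgroup.index_eq_one.2 h), fun K hK => ?_⟩
  have hmul := AddSubgroup.relIndex_mul_index hK.le
  rw [hH] at hmul
  rcases hp.eq_one_or_self_of_dvd _ (Dvd.intro_left _ hmul) with h | h
  · exact AddSubgroup.index_eq_one.1 h
  · rw [h, Nat.mul_eq_right hp.ne_zero, AddSubgroup.relIndex_eq_one] at hmul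
    exact absurd hmul hK.not_ge

section Hyperplanes

variable {p : ℕ} [Fact p.Prime] {V : Type*} [AddCommGroup V] [Module (ZMod p) V]

lemma index_ker_toAddSubgroup {φ : Module.Dual (ZMod p) V} (hφ : φ ≠ 0) :
    (LinearMap.ker φ).toAddSubgroup.index = p := by
  rw [show (LinearMap.ker φ).toAddSubgroup = φ.toAddMonoidHom.ker from rfl,
    AddSubgroup.index_ker, AddMonoidHom.range_eq_top.2 (LinearMap.surjective hφ),
    AddSubgroup.card_top, Nat.card_zmod]

variable [Finite V]

lemma card_hyperplanes_notMem_eq_card_dual_apply_eq_one (a : V) :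
    Nat.card {H : AddSubgroup V // H.index = p ∧ a ∉ H} =
      Nat.card {φ : Module.Dual (ZMod p) V // φ a = 1} := by
  symm
  refine Nat.card_eq_of_bijective
    (fun φ => ⟨(LinearMap.ker φ.1).toAddSubgroup, index_ker_toAddSubgroup ?_, ?_⟩) ⟨?_, ?_⟩
  · exact fun h => one_ne_zero (by rw [← φ.2, h, LinearMap.zero_apply])
  · exact fun h => one_ne_zero (φ.2.symm.trans h)
  · rintro ⟨φ, hφ⟩ ⟨ψ, hψ⟩ h
    exact Subtype.ext <| Module.Dual.eq_of_ker_eq_of_apply_eq a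
      (Submodule.toAddSubgroup_injective (congrArg Subtype.val h)) (hφ.trans hψ.symm)
      (ne_of_eq_of_ne hφ one_ne_zero)
  · rintro ⟨H, hH, haH⟩
    obtain ⟨f, hfa, hf⟩ :=
      (AddSubgroup.toZModSubmodule p H).exists_dual_map_eq_bot_of_notMem haH inferInstance
    have hφa : ((f a)⁻¹ • f) a = 1 := inv_mul_cancel₀ hfa
    refine ⟨⟨(f a)⁻¹ • f, hφa⟩, Subtype.ext ?_⟩
    refine ((AddSubgroup.isCoatom_of_index_eq_prime Fact.out hH).le_iff_eq ?_).1 fun x hx => ?_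
    · intro h
      have ha : a ∈ (LinearMap.ker ((f a)⁻¹ • f)).toAddSubgroup := by
        rw [show (LinearMap.ker ((f a)⁻¹ • f)).toAddSubgroup = ⊤ from h]
        trivial
      exact one_ne_zero (hφa.symm.trans ha)
    · show ((f a)⁻¹ • f) x = 0
      rw [LinearMap.smul_apply, LinearMap.mem_ker.1 (LinearMap.le_ker_iff_map.2 hf hx), smul_zero]

lemma card_dual : Nat.card (Module.Dual (ZMod p) V) = Nat.card V := by
  have := Fintype.ofFinite V
  have : Finite (Module.Dual (ZMod p) V) := Module.finite_of_finite (ZMod p)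
  have := Fintype.ofFinite (Module.Dual (ZMod p) V)
  rw [Nat.card_eq_fintype_card, Nat.card_eq_fintype_card, Module.card_eq_pow_finrank (K := ZMod p),
    Module.card_eq_pow_finrank (K := ZMod p) (V := V), Subspace.dual_finrank_eq]

lemma card_dual_apply_eq_one_mul {a : V} (ha : a ≠ 0) :
    Nat.card {φ : Module.Dual (ZMod p) V // φ a = 1} * p = Nat.card V := by
  set ev := Module.Dual.eval (ZMod p) V a
  have hev : ev ≠ 0 := fun h => ha <|
    (Module.forall_dual_apply_eq_zero_iff (ZMod p) a).1 fun φ => LinearMap.congr_fun h φ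
  have hfiber : Nat.card {φ : Module.Dual (ZMod p) V // φ a = 1} =
      Nat.card (LinearMap.ker ev).toAddSubgroup :=
    Nat.card_congr (ev.toAddMonoidHom.fiberEquivKerOfSurjective (LinearMap.surjective hev) 1)
  rw [hfiber, ← card_dual (p := p) (V := V), ← (LinearMap.ker ev).toAddSubgroup.card_mul_index,
    index_ker_toAddSubgroup hev]

lemma card_hyperplanes_notMem_mul {a : V} (ha : a ≠ 0) :
    Nat.card {H : AddSubgroup V // H.index = p ∧ a ∉ H} * p = Nat.card V := by
  rw [card_hyperplanes_notMem_eq_card_dual_apply_eq_one, card_dual_apply_eq_one_mul ha]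

open scoped Classical in
lemma sum_inv_card_hyperplanes_notMem {ℓ : ℕ} (hV : (Nat.card V).Coprime ℓ) {a : V} (ha : a ≠ 0)
    [Fintype {H : AddSubgroup V // H.index = p}] :
    ∑ H : {H : AddSubgroup V // H.index = p},
      (if a ∈ H.1 then 0 else (Nat.card H.1 : ZMod ℓ)⁻¹) = 1 := by
  set N := Nat.card {H : AddSubgroup V // H.index = p ∧ a ∉ H}
  have hcard (H : {H : AddSubgroup V // H.index = p}) : Nat.card H.1 = N := by
    refine Nat.eq_of_mul_eq_mul_right (Fact.out : p.Prime).pos ?_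
    rw [card_hyperplanes_notMem_mul ha, ← H.1.card_mul_index, H.2]
  have hfilter : #{H : {H : AddSubgroup V // H.index = p} | a ∉ H.1} = N := by
    rw [← Fintype.card_subtype, ← Nat.card_eq_fintype_card]
    exact Nat.card_congr (Equiv.subtypeSubtypeEquivSubtypeInter _ fun H => a ∉ H)
  have hN : IsUnit (N : ZMod ℓ) :=
    (ZMod.isUnit_iff_coprime _ _).2 <|
      hV.coprime_dvd_left ⟨p, (card_hyperplanes_notMem_mul ha).symm⟩
  simp only [Finset.sum_ite, Finset.sum_const_zero, zero_add, hcard, Finset.sum_const, hfilter,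
    nsmul_eq_mul, ZMod.mul_inv_of_unit _ hN]

lemma exists_sum_eps_hyperplanes_eq {ℓ : ℕ} (hV : (Nat.card V).Coprime ℓ)
    [Fintype {H : AddSubgroup V // H.index = p}] :
    ∃ c : ZMod ℓ, ∑ H : {H : AddSubgroup V // H.index = p}, eps ℓ H.1 = 1 + c • eps ℓ ⊤ := by
  classical
  set x := ∑ H : {H : AddSubgroup V // H.index = p}, eps ℓ H.1
  suffices h : ∀ a, (x - 1).coeff a = (x - 1).coeff 0 from
    ⟨_, sub_eq_iff_eq_add'.1 (eq_smul_eps_top_of_coeff_eq hV h)⟩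
  intro a
  rcases eq_or_ne a 0 with rfl | ha
  · rfl
  have hx (b : V) : x.coeff b =
      ∑ H : {H : AddSubgroup V // H.index = p},
        if b ∈ H.1 then (Nat.card H.1 : ZMod ℓ)⁻¹ else 0 := by
    simp only [x, coeff_sum, Finsupp.finsetSum_apply, coeff_eps]
  have hsplit (H : {H : AddSubgroup V // H.index = p}) :
      (if a ∈ H.1 then (Nat.card H.1 : ZMod ℓ)⁻¹ else 0) =
        (Nat.card H.1 : ZMod ℓ)⁻¹ - if a ∈ H.1 then 0 else (Nat.card H.1 : ZMod ℓ)⁻¹ := by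
    split_ifs <;> simp
  simp only [coeff_sub, Finsupp.sub_apply, hx, zero_mem, if_true, coeff_one_zero, hsplit,
    Finset.sum_sub_distrib, sum_inv_card_hyperplanes_notMem hV ha]
  rw [one_def, coeff_single, Finsupp.single_eq_of_ne ha, sub_zero]

end Hyperplanes

theorem module_decomposition_general (p ℓ r : ℕ) [NeZero p] (hp : p.Prime)
    (hcop : ℓ.Coprime p) (M : Type)
    [AddCommGroup M] [Module (AddMonoidAlgebra (ZMod ℓ) (Fin r → ZMod p)) M]
    (hfaithful : (augIdeal ℓ (Fin r → ZMod p)) •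
      (⊤ : Submodule (AddMonoidAlgebra (ZMod ℓ) (Fin r → ZMod p)) M) = ⊤) :
    DirectSum.IsInternal
      (fun B : {B : AddSubgroup (Fin r → ZMod p) // B.index = p} =>
        LinearMap.range
          (LinearMap.lsmul (AddMonoidAlgebra (ZMod ℓ) (Fin r → ZMod p)) M
            (eps ℓ B.1))) := by
  have : Fact p.Prime := ⟨hp⟩
  have : Fintype {B : AddSubgroup (Fin r → ZMod p) // B.index = p} := Fintype.ofFinite _
  have hV : (Nat.card (Fin r → ZMod p)).Coprime ℓ := by
    simpa [Nat.card_eq_fintype_card, ZMod.card] using hcop.symm.pow_left r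
  have hkill (m : M) : eps ℓ ⊤ • m = 0 :=
    smul_eq_zero_of_le_annihilator hfaithful augIdeal_le_annihilator_eps_top m
  obtain ⟨c, hsum⟩ := exists_sum_eps_hyperplanes_eq (p := p) hV
  refine CompleteOrthogonalIdempotents.isInternal_range <|
    CompleteOrthogonalIdempotents.iff_ortho_complete.2 ⟨fun H K hHK => ?_, ?_⟩
  · have hsup : H.1 ⊔ K.1 = ⊤ := (AddSubgroup.isCoatom_of_index_eq_prime hp H.2).sup_eq_top_of_ne
      (AddSubgroup.isCoatom_of_index_eq_prime hp K.2) fun h => hHK (Subtype.ext h)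
    ext m
    rw [Module.End.mul_apply, LinearMap.lsmul_apply, LinearMap.lsmul_apply, smul_smul,
      eps_mul_eps_of_sup_eq_top hV hsup, hkill, LinearMap.zero_apply]
  · ext m
    rw [← map_sum, hsum, map_add, LinearMap.add_apply, LinearMap.lsmul_apply, LinearMap.lsmul_apply,
      one_smul, Algebra.smul_def, mul_smul, hkill, smul_zero, add_zero, Module.End.one_apply]

/-- For `A = (ℤ/pℤ)^r` elementary abelian, `ℓ` coprime to `p`, and a
`(ℤ/ℓℤ)[A]`-module `M` with trivial coinvariants (`I_A · M = M`), the module `M`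
is the internal direct sum of the submodules `ε_i M` over the index-`p`
subgroups `A_i`. -/
theorem module_decomposition (p ℓ r : ℕ) [NeZero p] (hp : p.Prime) (hℓ : 0 < ℓ)
    (hcop : ℓ.Coprime p) (M : Type)
    [AddCommGroup M] [Module (AddMonoidAlgebra (ZMod ℓ) (Fin r → ZMod p)) M]
    (hfaithful : (augIdeal ℓ (Fin r → ZMod p)) •
      (⊤ : Submodule (AddMonoidAlgebra (ZMod ℓ) (Fin r → ZMod p)) M) = ⊤) :
    DirectSum.IsInternal
      (fun B : {B : AddSubgroup (Fin r → ZMod p) // B.index = p} =>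
        LinearMap.range
          (LinearMap.lsmul (AddMonoidAlgebra (ZMod ℓ) (Fin r → ZMod p)) M
            (eps ℓ B.1))) :=
  module_decomposition_general p ℓ r hp hcop M hfaithful
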